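/- Let σ : ℝ → ℝ be differentiable with σ'(z) ≥ α > 0. Define the pseudo-gradient g(w; x) = (σ(wᵀx) − σ(w*ᵀx))x and the objective f(w) = (1/2)‖w − w*‖². Then for any finite family of vectors x_1, …, x_n, (1/n)Σ_i ⟨g(w; x_i), ∇f(w)⟩ ≥ α · (1/n)Σ_i ((w − w*)ᵀ x_i)² ≥ 0 for all w ∈ ℝ^d. -/

import Mathlib

/-! By the mean value theorem, `σ' ≥ α` makes `σ` strongly monotone:
`(σ a - σ b)(a - b) ≥ α (a - b)²`. With `a = wᵀx`, `b = w*ᵀx` the left side is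
`⟪g(w; x), w - w*⟫`, so the inequality holds sample by sample and survives averaging. -/

open RealInnerProductSpace Finset

theorem mul_sq_sub_le_sub_mul_sub_of_le_deriv {f : ℝ → ℝ} (hf : Differentiable ℝ f) {C : ℝ}
    (hf' : ∀ x, C ≤ deriv f x) (a b : ℝ) : C * (a - b) ^ 2 ≤ (f a - f b) * (a - b) := by
  wlog hba : b ≤ a generalizing a b
  · convert this b a (le_of_not_ge hba) using 1 <;> ring
  calc C * (a - b) ^ 2 = C * (a - b) * (a - b) := by ring
    _ ≤ (f a - f b) * (a - b) :=
      mul_le_mul_of_nonneg_right (mul_sub_le_image_sub_of_le_deriv hf hf' hba) (sub_nonneg.2 hba)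

section PseudoGradient

variable {E : Type*} [NormedAddCommGroup E] [InnerProductSpace ℝ E]

def pseudoGradient (σ : ℝ → ℝ) (wstar w x : E) : E :=
  (σ ⟪w, x⟫ - σ ⟪wstar, x⟫) • x

theorem mul_inner_sq_le_inner_pseudoGradient {σ : ℝ → ℝ} (hσ : Differentiable ℝ σ) {α : ℝ}
    (hσ' : ∀ z, α ≤ deriv σ z) (wstar w x : E) :
    α * ⟪w - wstar, x⟫ ^ 2 ≤ ⟪pseudoGradient σ wstar w x, w - wstar⟫ := by
  rw [pseudoGradient, real_inner_smul_left, real_inner_comm (w - wstar), inner_sub_left]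
  exact mul_sq_sub_le_sub_mul_sub_of_le_deriv hσ hσ' _ _

end PseudoGradient

theorem glmtron_pseudogradient_correlation_general {d n : ℕ}
    (σ : ℝ → ℝ) (α : ℝ) (hα : 0 < α)
    (hσ : Differentiable ℝ σ)
    (hσ' : ∀ z, α ≤ deriv σ z)
    (x : Fin n → EuclideanSpace ℝ (Fin d))
    (wstar : EuclideanSpace ℝ (Fin d)) :
    ∀ w : EuclideanSpace ℝ (Fin d),
      α * ((1 / (n : ℝ)) * ∑ i, (⟪w - wstar, x i⟫ : ℝ) ^ 2) ≤
        (1 / (n : ℝ)) * ∑ i, ⟪(σ ⟪w, x i⟫ - σ ⟪wstar, x i⟫) • x i, w - wstar⟫ ∧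
      0 ≤ α * ((1 / (n : ℝ)) * ∑ i, (⟪w - wstar, x i⟫ : ℝ) ^ 2) := by
  intro w
  refine ⟨?_, by positivity⟩
  rw [mul_left_comm, mul_sum]
  gcongr with i
  exact mul_inner_sq_le_inner_pseudoGradient hσ hσ' wstar w (x i)

theorem glmtron_pseudogradient_correlation {d n : ℕ} (hn : 0 < n)
    (σ : ℝ → ℝ) (α : ℝ) (hα : 0 < α)
    (hσ : Differentiable ℝ σ)
    (hσ' : ∀ z, α ≤ deriv σ z)
    (x : Fin n → EuclideanSpace ℝ (Fin d))
    (wstar : EuclideanSpace ℝ (Fin d)) :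
    ∀ w : EuclideanSpace ℝ (Fin d),
      α * ((1 / (n : ℝ)) * ∑ i, (⟪w - wstar, x i⟫ : ℝ) ^ 2) ≤
        (1 / (n : ℝ)) * ∑ i, ⟪(σ ⟪w, x i⟫ - σ ⟪wstar, x i⟫) • x i, w - wstar⟫ ∧
      0 ≤ α * ((1 / (n : ℝ)) * ∑ i, (⟪w - wstar, x i⟫ : ℝ) ^ 2) :=
  glmtron_pseudogradient_correlation_general σ α hα hσ hσ' x wstar
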